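/- Let ⪯ be a total order on a finite set D of weighted axis-parallel segments refining the order by weight, and suppose the ⪯-lexicographically-maximum optimum solution S_max has ⪯-minimum element R_min. If every segment R ≺ R_min is removed from D, then every optimum solution of the resulting instance contains the ⪯-minimum segment of the remaining set. -/

import Mathlib

/-!
Removing the segments below `Rmin` does not change the optimum, since `Smax` survives the
removal; hence an optimum solution `S'` of the reduced instance is optimal for `D` as well. If
`S' ≠ Smax`, lexicographic maximality makes the sorted ranks of `S'` precede those of `Smax`.
Both lists start at rank `ρ Rmin` or above, and the list of `Smax` starts exactly there, so the
list of `S'` must start with `ρ Rmin` too, i.e. `Rmin ∈ S'`.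
-/

open Finset

def IsRect (R : Set (ℝ × ℝ)) : Prop :=
  ∃ x1 x2 y1 y2 : ℝ, R = Set.Icc x1 x2 ×ˢ Set.Icc y1 y2

def IsSeg (R : Set (ℝ × ℝ)) : Prop :=
  ∃ x1 x2 y1 y2 : ℝ, (x1 = x2 ∨ y1 = y2) ∧ R = Set.Icc x1 x2 ×ˢ Set.Icc y1 y2

/-- A solution: a subset of `D` of cardinality at most `k` consisting of pairwise disjoint
objects. -/
def IsSolution (D : Finset (Set (ℝ × ℝ))) (k : ℕ) (S : Finset (Set (ℝ × ℝ))) : Prop :=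
  S ⊆ D ∧ S.card ≤ k ∧ (↑S : Set (Set (ℝ × ℝ))).Pairwise Disjoint

/-- `optk D ω k` : the maximum total `ω`-weight of a set of at most `k` pairwise disjoint
members of `D`. -/
noncomputable def optk (D : Finset (Set (ℝ × ℝ))) (ω : Set (ℝ × ℝ) → ℝ) (k : ℕ) : ℝ :=
  sSup {w : ℝ | ∃ S : Finset (Set (ℝ × ℝ)), IsSolution D k S ∧ w = ∑ R ∈ S, ω R}

theorem List.head_eq_of_lex_lt_of_mem {α : Type*} [LinearOrder α] {a b m : α} {l t : List α}
    (hm : m ∈ b :: t) (hsorted : (b :: t).Pairwise (· ≤ ·)) (ha : m ≤ a)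
    (hlex : List.Lex (· < ·) (a :: l) (b :: t)) : a = m := by
  have hbm : b ≤ m := by
    rcases List.mem_cons.1 hm with rfl | hmt
    · exact le_rfl
    · exact List.rel_of_pairwise_cons hsorted hmt
  cases hlex with
  | rel hab => exact absurd (hab.trans_le hbm) ha.not_gt
  | cons => exact le_antisymm hbm ha

theorem Finset.mem_of_sort_lex_lt {α : Type*} [LinearOrder α] {A B : Finset α} {m : α}
    (hA : A.Nonempty) (hmB : m ∈ B) (hAm : ∀ a ∈ A, m ≤ a)
    (hlex : List.Lex (· < ·) (A.sort (· ≤ ·)) (B.sort (· ≤ ·))) : m ∈ A := by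
  obtain ⟨a, l, hAl⟩ := List.exists_cons_of_ne_nil
    (List.ne_nil_of_mem ((mem_sort (· ≤ ·)).2 hA.choose_spec))
  obtain ⟨b, t, hBt⟩ := List.exists_cons_of_ne_nil
    (List.ne_nil_of_mem ((mem_sort (· ≤ ·)).2 hmB))
  have haA : a ∈ A := (mem_sort (· ≤ ·)).1 (hAl ▸ List.mem_cons_self)
  have hmBt : m ∈ b :: t := hBt ▸ (mem_sort (· ≤ ·)).2 hmB
  have hsorted : (b :: t).Pairwise (· ≤ ·) := hBt ▸ pairwise_sort B (· ≤ ·)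
  rw [hAl, hBt] at hlex
  exact List.head_eq_of_lex_lt_of_mem hmBt hsorted (hAm a haA) hlex ▸ haA

theorem IsSolution.mono {D E S : Finset (Set (ℝ × ℝ))} {k : ℕ} (hS : IsSolution D k S)
    (hDE : D ⊆ E) : IsSolution E k S :=
  ⟨hS.1.trans hDE, hS.2⟩

theorem IsSolution.sum_le_optk {D S : Finset (Set (ℝ × ℝ))} {k : ℕ} (ω : Set (ℝ × ℝ) → ℝ)
    (hS : IsSolution D k S) : ∑ R ∈ S, ω R ≤ optk D ω k := by
  have hfin : {w : ℝ | ∃ S, IsSolution D k S ∧ w = ∑ R ∈ S, ω R}.Finite := by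
    refine ((D.powerset.image fun S => ∑ R ∈ S, ω R).finite_toSet).subset ?_
    rintro w ⟨S, hS, rfl⟩
    exact mem_image_of_mem _ (mem_powerset.2 hS.1)
  exact le_csSup hfin.bddAbove ⟨S, hS, rfl⟩

theorem IsSolution.sum_eq_optk_of_subset {D D' S S' : Finset (Set (ℝ × ℝ))} {k : ℕ}
    {ω : Set (ℝ × ℝ) → ℝ} (hD' : D' ⊆ D) (hS : IsSolution D' k S)
    (hSopt : ∑ R ∈ S, ω R = optk D ω k) (hS' : IsSolution D' k S')
    (hS'opt : ∑ R ∈ S', ω R = optk D' ω k) : ∑ R ∈ S', ω R = optk D ω k :=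
  le_antisymm ((hS'.mono hD').sum_le_optk ω)
    (hSopt ▸ hS'opt ▸ hS.sum_le_optk ω)

theorem stmt12_general (D : Finset (Set (ℝ × ℝ))) (ω : Set (ℝ × ℝ) → ℝ) (k : ℕ)
    (hpos : ∀ R ∈ D, 0 < ω R)
    (ρ : Set (ℝ × ℝ) → ℕ) (hinj : Set.InjOn ρ (↑D : Set (Set (ℝ × ℝ))))
    (Smax : Finset (Set (ℝ × ℝ))) (hSmax : IsSolution D k Smax)
    (hopt : ∑ R ∈ Smax, ω R = optk D ω k)
    (hlexmax : ∀ S : Finset (Set (ℝ × ℝ)), IsSolution D k S →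
      ∑ R ∈ S, ω R = optk D ω k → S ≠ Smax →
      List.Lex (· < ·) ((S.image ρ).sort (· ≤ ·)) ((Smax.image ρ).sort (· ≤ ·)))
    (Rmin : Set (ℝ × ℝ)) (hRmin : Rmin ∈ Smax) (hmin : ∀ R ∈ Smax, ρ Rmin ≤ ρ R)
    (D' : Finset (Set (ℝ × ℝ)))
    (hD' : ∀ R, R ∈ D' ↔ R ∈ D ∧ ρ Rmin ≤ ρ R) :
    ∀ S' : Finset (Set (ℝ × ℝ)), IsSolution D' k S' →
      ∑ R ∈ S', ω R = optk D' ω k →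
      ∀ R0 ∈ D', (∀ R ∈ D', ρ R0 ≤ ρ R) → R0 ∈ S' := by
  intro S' hS' hS'opt R0 hR0 hR0min
  have hD'D : D' ⊆ D := fun R hR => ((hD' R).1 hR).1
  have hRminD' : Rmin ∈ D' := (hD' Rmin).2 ⟨hSmax.1 hRmin, le_rfl⟩
  obtain rfl : Rmin = R0 :=
    hinj (hD'D hRminD') (hD'D hR0) (le_antisymm ((hD' R0).1 hR0).2 (hR0min Rmin hRminD'))
  have hSmax' : IsSolution D' k Smax :=
    ⟨fun R hR => (hD' R).2 ⟨hSmax.1 hR, hmin R hR⟩, hSmax.2⟩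
  have hS'optD := hSmax'.sum_eq_optk_of_subset hD'D hopt hS' hS'opt
  by_cases hS'Smax : S' = Smax
  · exact hS'Smax ▸ hRmin
  have hS'ne : S'.Nonempty := by
    refine nonempty_of_sum_ne_zero (f := ω) ?_
    rw [hS'optD, ← hopt]
    exact (sum_pos (fun R hR => hpos R (hSmax.1 hR)) ⟨Rmin, hRmin⟩).ne'
  have hρRmin : ρ Rmin ∈ S'.image ρ :=
    mem_of_sort_lex_lt (hS'ne.image ρ) (mem_image_of_mem ρ hRmin)
      (forall_mem_image.2 fun R hR => ((hD' R).1 (hS'.1 hR)).2)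
      (hlexmax S' (hS'.mono hD'D) hS'optD hS'Smax)
  obtain ⟨R, hRS', hρR⟩ := mem_image.1 hρRmin
  exact hinj (hD'D (hS'.1 hRS')) (hD'D hRminD') hρR ▸ hRS'

/-- if `Smax` is the lexicographically maximum optimum solution (w.r.t. a
total order `⪯`, encoded by a rank function `ρ` injective on `D` and refining the weight
order) with `⪯`-minimum element `Rmin`, and all segments `≺ Rmin` are removed from `D`,
then every optimum solution of the new instance contains the `⪯`-minimum remaining
segment. -/
theorem stmt12 (D : Finset (Set (ℝ × ℝ))) (ω : Set (ℝ × ℝ) → ℝ) (k : ℕ)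
    (hseg : ∀ R ∈ D, IsSeg R) (hpos : ∀ R ∈ D, 0 < ω R)
    (ρ : Set (ℝ × ℝ) → ℕ) (hinj : Set.InjOn ρ (↑D : Set (Set (ℝ × ℝ))))
    (hrefine : ∀ R ∈ D, ∀ R' ∈ D, ω R < ω R' → ρ R < ρ R')
    (Smax : Finset (Set (ℝ × ℝ))) (hSmax : IsSolution D k Smax)
    (hopt : ∑ R ∈ Smax, ω R = optk D ω k)
    (hlexmax : ∀ S : Finset (Set (ℝ × ℝ)), IsSolution D k S →
      ∑ R ∈ S, ω R = optk D ω k → S ≠ Smax →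
      List.Lex (· < ·) ((S.image ρ).sort (· ≤ ·)) ((Smax.image ρ).sort (· ≤ ·)))
    (Rmin : Set (ℝ × ℝ)) (hRmin : Rmin ∈ Smax) (hmin : ∀ R ∈ Smax, ρ Rmin ≤ ρ R)
    (D' : Finset (Set (ℝ × ℝ)))
    (hD' : ∀ R, R ∈ D' ↔ R ∈ D ∧ ρ Rmin ≤ ρ R) :
    ∀ S' : Finset (Set (ℝ × ℝ)), IsSolution D' k S' →
      ∑ R ∈ S', ω R = optk D' ω k →
      ∀ R0 ∈ D', (∀ R ∈ D', ρ R0 ≤ ρ R) → R0 ∈ S' :=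
  stmt12_general D ω k hpos ρ hinj Smax hSmax hopt hlexmax Rmin hRmin hmin D' hD'
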